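/- One-dimensional core Carleman estimate (inequality (A.2) in the proof of Lemma A.1). Let ℓ > 0, let d : [0,ℓ] → ℝ be twice continuously differentiable with d'(x) < 0 on [0,ℓ], let λ > 0 and δ > 0, and set ψ(x) = (e^{λd(x)} − e^{2λ‖d‖})/δ² where ‖d‖ = max_{[0,ℓ]} |d|. Then there exist s₁ > 0 and C > 0 such that for every s ≥ s₁ and every continuously differentiable function w : [0,ℓ] → ℝ with w(0) = 0, ∫₀^ℓ ( |w'(x)|² + s²|w(x)|² ) e^{2sψ(x)} dx ≤ C ∫₀^ℓ |w'(x)|² e^{2sψ(x)} dx. -/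

import Mathlib

/-!
For a weight `ρ ≥ 0` with `ρ' ≤ -k ρ` and `w(a) = 0`, integrating `(w² ρ)' = 2 w w' ρ + w² ρ'`
and using `2 w w' ≤ (k/2) w² + (2/k) w'²` gives `(k/2) ∫ w² ρ ≤ (2/k) ∫ w'² ρ`, because the
boundary term `w(b)² ρ(b)` is nonnegative. For `ρ = e^{2sψ}` one has `ρ' = 2 s ψ' ρ`, and
`ψ' = λ d' e^{λ d} / δ²` is continuous and negative on `[0, ℓ]`, hence `ψ' ≤ -c` for some `c > 0`
by compactness. This yields `s² c² ∫ w² e^{2sψ} ≤ ∫ w'² e^{2sψ}` for every `s > 0`.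
-/

open MeasureTheory Set

theorem integral_sq_mul_weight_le_of_deriv_weight_le {a b k : ℝ} {w w' ρ ρ' : ℝ → ℝ}
    (hab : a ≤ b) (hk : 0 < k)
    (hw : ContinuousOn w (Icc a b)) (hw' : ∀ x ∈ Ioo a b, HasDerivAt w (w' x) x) (hwa : w a = 0)
    (hρ : ContinuousOn ρ (Icc a b)) (hρ' : ∀ x ∈ Ioo a b, HasDerivAt ρ (ρ' x) x)
    (hρ_nonneg : ∀ x ∈ Icc a b, 0 ≤ ρ x) (hρ'_le : ∀ x ∈ Ioo a b, ρ' x ≤ -k * ρ x)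
    (hint : IntegrableOn (fun x => w' x ^ 2 * ρ x) (Ioo a b)) :
    k ^ 2 * ∫ x in Ioo a b, w x ^ 2 * ρ x ≤ 4 * ∫ x in Ioo a b, w' x ^ 2 * ρ x := by
  have hwρ : IntegrableOn (fun x => w x ^ 2 * ρ x) (Icc a b) :=
    ((hw.pow 2).mul hρ).integrableOn_Icc
  have hint' : IntegrableOn (fun x => w' x ^ 2 * ρ x) (Icc a b) := by
    rwa [integrableOn_Icc_iff_integrableOn_Ioo]
  have hderiv_le : ∀ x ∈ Ioo a b, 2 * w x * w' x * ρ x + w x ^ 2 * ρ' x ≤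
      2 / k * (w' x ^ 2 * ρ x) - k / 2 * (w x ^ 2 * ρ x) := by
    intro x hx
    have hsq : 0 ≤ (k * w x - 2 * w' x) ^ 2 * ρ x / (2 * k) := by
      have := hρ_nonneg x (Ioo_subset_Icc_self hx)
      positivity
    have hρ'x : w x ^ 2 * ρ' x ≤ w x ^ 2 * (-k * ρ x) :=
      mul_le_mul_of_nonneg_left (hρ'_le x hx) (sq_nonneg _)
    have hid : 2 / k * (w' x ^ 2 * ρ x) - k / 2 * (w x ^ 2 * ρ x) - 2 * w x * w' x * ρ x
        - w x ^ 2 * (-k * ρ x) = (k * w x - 2 * w' x) ^ 2 * ρ x / (2 * k) := by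
      field_simp
      ring
    linarith
  have hFTC := intervalIntegral.sub_le_integral_of_hasDeriv_right_of_le
    (g := fun x => w x ^ 2 * ρ x) (φ := fun x => 2 / k * (w' x ^ 2 * ρ x) - k / 2 * (w x ^ 2 * ρ x))
    hab ((hw.pow 2).mul hρ)
    (fun x hx => (((hw' x hx).pow 2).mul (hρ' x hx)).hasDerivWithinAt)
    (by exact (hint'.const_mul (2 / k)).sub (hwρ.const_mul (k / 2)))
    (fun x hx => by simpa using hderiv_le x hx)
  rw [intervalIntegral.integral_of_le hab, integral_Ioc_eq_integral_Ioo,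
    integral_sub (hint.const_mul _) ((hwρ.mono_set Ioo_subset_Icc_self).const_mul _),
    integral_const_mul, integral_const_mul, hwa] at hFTC
  set A := ∫ x in Ioo a b, w' x ^ 2 * ρ x
  set B := ∫ x in Ioo a b, w x ^ 2 * ρ x
  have hboundary : 0 ≤ w b ^ 2 * ρ b :=
    mul_nonneg (sq_nonneg _) (hρ_nonneg b (right_mem_Icc.mpr hab))
  have hAB : 0 ≤ 2 / k * A - k / 2 * B := hboundary.trans (by simpa using hFTC)
  have hid : 2 * k * (2 / k * A - k / 2 * B) = 4 * A - k ^ 2 * B := by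
    field_simp
    ring
  linarith [mul_nonneg (by positivity : (0 : ℝ) ≤ 2 * k) hAB]

theorem sq_mul_integral_sq_mul_exp_le {a b c s : ℝ} {w w' ψ ψ' : ℝ → ℝ}
    (hab : a ≤ b) (hc : 0 < c) (hs : 0 < s)
    (hw : ContinuousOn w (Icc a b)) (hw' : ∀ x ∈ Ioo a b, HasDerivAt w (w' x) x) (hwa : w a = 0)
    (hψ : ContinuousOn ψ (Icc a b)) (hψ' : ∀ x ∈ Ioo a b, HasDerivAt ψ (ψ' x) x)
    (hψ'_le : ∀ x ∈ Ioo a b, ψ' x ≤ -c)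
    (hint : IntegrableOn (fun x => w' x ^ 2 * Real.exp (2 * s * ψ x)) (Ioo a b)) :
    (s * c) ^ 2 * ∫ x in Ioo a b, w x ^ 2 * Real.exp (2 * s * ψ x) ≤
      ∫ x in Ioo a b, w' x ^ 2 * Real.exp (2 * s * ψ x) := by
  have key := integral_sq_mul_weight_le_of_deriv_weight_le (ρ := fun x => Real.exp (2 * s * ψ x))
    hab (by positivity : 0 < 2 * s * c) hw hw' hwa (continuousOn_const.mul hψ).rexp
    (fun x hx => ((hψ' x hx).const_mul (2 * s)).exp) (fun x _ => (Real.exp_pos _).le)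
    (fun x hx => by linear_combination (2 * s * Real.exp (2 * s * ψ x)) * hψ'_le x hx)
    hint
  linarith

theorem ContDiffOn.continuousOn_deriv_Icc {f : ℝ → ℝ} {a b : ℝ} (hab : a < b)
    (hf : ContDiffOn ℝ 1 f (Icc a b)) (hdiff : ∀ x ∈ Icc a b, DifferentiableAt ℝ f x) :
    ContinuousOn (deriv f) (Icc a b) :=
  (hf.continuousOn_derivWithin (uniqueDiffOn_Icc hab) le_rfl).congr fun x hx =>
    ((hdiff x hx).derivWithin (uniqueDiffOn_Icc hab x hx)).symm

theorem ContDiffOn.integrableOn_deriv_sq_mul {f ρ : ℝ → ℝ} {a b : ℝ}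
    (hf : ContDiffOn ℝ 1 f (Icc a b)) (hρ : ContinuousOn ρ (Icc a b)) :
    IntegrableOn (fun x => deriv f x ^ 2 * ρ x) (Ioo a b) := by
  rcases lt_or_ge a b with hab | hba
  · have hcont := ((hf.continuousOn_derivWithin (uniqueDiffOn_Icc hab) le_rfl).pow 2).mul hρ
    refine (hcont.integrableOn_Icc.mono_set Ioo_subset_Icc_self).congr_fun (fun x hx => ?_)
      measurableSet_Ioo
    simp only [Pi.mul_apply, Pi.pow_apply, derivWithin_of_mem_nhds (Icc_mem_nhds hx.1 hx.2)]
  · simp [Ioo_eq_empty_of_le hba]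

noncomputable def carlemanWeight (lam δ K : ℝ) (d : ℝ → ℝ) (x : ℝ) : ℝ :=
  (Real.exp (lam * d x) - K) / δ ^ 2

theorem ContinuousOn.carlemanWeight {lam δ K : ℝ} {d : ℝ → ℝ} {s : Set ℝ}
    (hd : ContinuousOn d s) : ContinuousOn (carlemanWeight lam δ K d) s :=
  ((continuousOn_const.mul hd).rexp.sub continuousOn_const).div_const _

theorem exists_pos_hasDerivAt_carlemanWeight_le_neg {a b lam δ K : ℝ} {d : ℝ → ℝ}
    (hab : a < b) (hd : ContDiffOn ℝ 1 d (Icc a b)) (hd' : ∀ x ∈ Icc a b, deriv d x < 0)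
    (hlam : 0 < lam) (hδ : δ ≠ 0) :
    ∃ c > 0, ∀ x ∈ Ioo a b,
      HasDerivAt (carlemanWeight lam δ K d) (lam * deriv d x * Real.exp (lam * d x) / δ ^ 2) x ∧
      lam * deriv d x * Real.exp (lam * d x) / δ ^ 2 ≤ -c := by
  have hdiff : ∀ x ∈ Icc a b, DifferentiableAt ℝ d x := fun x hx =>
    differentiableAt_of_deriv_ne_zero (hd' x hx).ne
  have hcont : ContinuousOn (fun x => -(lam * deriv d x * Real.exp (lam * d x) / δ ^ 2))
      (Icc a b) :=
    (((continuousOn_const.mul (hd.continuousOn_deriv_Icc hab hdiff)).mul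
      (continuousOn_const.mul hd.continuousOn).rexp).div_const _).neg
  obtain ⟨c, hc, hc_le⟩ := isCompact_Icc.exists_forall_le' hcont (a := 0) fun x hx =>
    neg_pos.mpr <| div_neg_of_neg_of_pos
      (mul_neg_of_neg_of_pos (mul_neg_of_pos_of_neg hlam (hd' x hx)) (Real.exp_pos _))
      (by positivity)
  refine ⟨c, hc, fun x hx => ⟨?_, by linarith [hc_le x (Ioo_subset_Icc_self hx)]⟩⟩
  exact ((((hdiff x (Ioo_subset_Icc_self hx)).hasDerivAt.const_mul lam).exp.sub_const K).div_const
    (δ ^ 2)).congr_deriv (by ring)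

theorem core_carleman_1d_general
    (ℓ : ℝ) (hℓ : 0 < ℓ)
    (d : ℝ → ℝ)
    (hd : ContDiffOn ℝ 2 d (Set.Icc 0 ℓ))
    (hd' : ∀ x ∈ Set.Icc 0 ℓ, deriv d x < 0)
    (Md : ℝ)
    (lam δ : ℝ) (hlam : 0 < lam) (hδ : 0 < δ) :
    ∃ s₁ > (0:ℝ), ∃ C > (0:ℝ), ∀ s ≥ s₁, ∀ w : ℝ → ℝ,
      ContDiffOn ℝ 1 w (Set.Icc 0 ℓ) → w 0 = 0 →
      (∫ x in Set.Ioo 0 ℓ,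
          ((deriv w x) ^ 2 + s ^ 2 * (w x) ^ 2) *
            Real.exp (2 * s * ((Real.exp (lam * d x) - Real.exp (2 * lam * Md)) / δ ^ 2)))
        ≤ C * ∫ x in Set.Ioo 0 ℓ,
            (deriv w x) ^ 2 *
              Real.exp (2 * s * ((Real.exp (lam * d x) - Real.exp (2 * lam * Md)) / δ ^ 2)) := by
  set ψ := carlemanWeight lam δ (Real.exp (2 * lam * Md)) d
  have hd₁ : ContDiffOn ℝ 1 d (Icc 0 ℓ) := hd.of_le one_le_two
  obtain ⟨c, hc, hψ'⟩ := exists_pos_hasDerivAt_carlemanWeight_le_neg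
    (K := Real.exp (2 * lam * Md)) hℓ hd₁ hd' hlam hδ.ne'
  refine ⟨1, one_pos, 1 + 1 / c ^ 2, by positivity, fun s hs w hw hw0 => ?_⟩
  show ∫ x in Ioo 0 ℓ, (deriv w x ^ 2 + s ^ 2 * w x ^ 2) * Real.exp (2 * s * ψ x) ≤
    (1 + 1 / c ^ 2) * ∫ x in Ioo 0 ℓ, deriv w x ^ 2 * Real.exp (2 * s * ψ x)
  have hψ : ContinuousOn ψ (Icc 0 ℓ) := hd₁.continuousOn.carlemanWeight
  have hρ : ContinuousOn (fun x => Real.exp (2 * s * ψ x)) (Icc 0 ℓ) :=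
    (continuousOn_const.mul hψ).rexp
  have hw' : ∀ x ∈ Ioo 0 ℓ, HasDerivAt w (deriv w x) x := fun x hx =>
    ((hw.differentiableOn one_ne_zero x (Ioo_subset_Icc_self hx)).differentiableAt
      (Icc_mem_nhds hx.1 hx.2)).hasDerivAt
  have hint' := hw.integrableOn_deriv_sq_mul hρ
  have hint : IntegrableOn (fun x => s ^ 2 * w x ^ 2 * Real.exp (2 * s * ψ x)) (Ioo 0 ℓ) :=
    ((continuousOn_const.mul (hw.continuousOn.pow 2)).mul hρ).integrableOn_Icc.mono_set
      Ioo_subset_Icc_self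
  have key := sq_mul_integral_sq_mul_exp_le hℓ.le hc (by linarith) hw.continuousOn hw' hw0 hψ
    (fun x hx => (hψ' x hx).1) (fun x hx => (hψ' x hx).2) hint'
  have hsq : ∫ x in Ioo 0 ℓ, s ^ 2 * w x ^ 2 * Real.exp (2 * s * ψ x) =
      (s * c) ^ 2 * (∫ x in Ioo 0 ℓ, w x ^ 2 * Real.exp (2 * s * ψ x)) / c ^ 2 := by
    simp only [mul_assoc, integral_const_mul]
    field_simp
  simp only [add_mul]
  rw [integral_add hint' hint, hsq, one_mul, one_div_mul_eq_div]
  linarith [div_le_div_of_nonneg_right key (sq_nonneg c)]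

/-- Inequality (A.2): one-dimensional core Carleman estimate with weight
`ψ(x) = (e^{λ d(x)} − e^{2λ‖d‖})/δ²`. -/
theorem core_carleman_1d
    (ℓ : ℝ) (hℓ : 0 < ℓ)
    (d : ℝ → ℝ)
    (hd : ContDiffOn ℝ 2 d (Set.Icc 0 ℓ))
    (hd' : ∀ x ∈ Set.Icc 0 ℓ, deriv d x < 0)
    (Md : ℝ) (hMd : IsGreatest ((fun x => |d x|) '' Set.Icc 0 ℓ) Md)
    (lam δ : ℝ) (hlam : 0 < lam) (hδ : 0 < δ) :
    ∃ s₁ > (0:ℝ), ∃ C > (0:ℝ), ∀ s ≥ s₁, ∀ w : ℝ → ℝ,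
      ContDiffOn ℝ 1 w (Set.Icc 0 ℓ) → w 0 = 0 →
      (∫ x in Set.Ioo 0 ℓ,
          ((deriv w x) ^ 2 + s ^ 2 * (w x) ^ 2) *
            Real.exp (2 * s * ((Real.exp (lam * d x) - Real.exp (2 * lam * Md)) / δ ^ 2)))
        ≤ C * ∫ x in Set.Ioo 0 ℓ,
            (deriv w x) ^ 2 *
              Real.exp (2 * s * ((Real.exp (lam * d x) - Real.exp (2 * lam * Md)) / δ ^ 2)) :=
  core_carleman_1d_general ℓ hℓ d hd hd' Md lam δ hlam hδ
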